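/- arXiv:2305.04545 — 3 statements merged into one kernel-verified Lean document; each statement's English description precedes it below -/
import Mathlib

section
/- Let G be a finite abelian group, g ∈ G, and H a subgroup of the character group G*. Let g|_H denote the restriction of the evaluation character χ ↦ χ(g) to H. Then the sum over χ ∈ H of r_g^χ equals (|H|/2)·o(g)·(1 − 1/o(g|_H)), where r_g^χ ∈ [0, o(g)−1] satisfies χ(g) = e^{2πi·r_g^χ/o(g)}. -/
/-- The element `g ∈ G` viewed, via double duality, as a character of a subgroup
`H` of the character group `G* = Hom(G, ℂ*)`: it sends `χ ∈ H` to `χ(g)`. -/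
def evalChar {G : Type*} [CommGroup G] (g : G) (H : Subgroup (G →* ℂˣ)) : H →* ℂˣ where
  toFun χ := (χ : G →* ℂˣ) g
  map_one' := rfl
  map_mul' _ _ := rfl

/-- `∑_{χ ∈ H} r_g^χ = (|H|/2)·o(g)·(1 − 1/o(g|_H))`. -/
theorem stmt_2 (G : Type*) [CommGroup G] [Fintype G] [Fintype (G →* ℂˣ)]
    (g : G) (r : (G →* ℂˣ) → ℕ)
    (hr : ∀ χ : G →* ℂˣ, r χ ≤ orderOf g - 1 ∧
      (χ g : ℂ) = Complex.exp (2 * Real.pi * Complex.I * (r χ : ℂ) / (orderOf g : ℂ)))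
    (H : Subgroup (G →* ℂˣ)) [DecidablePred (· ∈ H)] :
    ∑ χ ∈ Finset.univ.filter (· ∈ H), (r χ : ℚ) =
      (Nat.card H : ℚ) / 2 * (orderOf g : ℚ) *
        (1 - 1 / (orderOf (evalChar g H) : ℚ)) := by
  classical
  set n := orderOf g with hn
  have hn0 : 0 < n := orderOf_pos g
  have hnC : (n : ℂ) ≠ 0 := Nat.cast_ne_zero.2 hn0.ne'
  set φ := evalChar g H with hφdef
  set S := Finset.univ.filter (· ∈ H) with hSdef
  -- elementary divisibility lemma
  have hdvd : ∀ a : ℕ, Complex.exp (2 * Real.pi * Complex.I * (a : ℂ) / (n : ℂ)) = 1 → n ∣ a := by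
    intro a ha
    rw [Complex.exp_eq_one_iff] at ha
    obtain ⟨k, hk⟩ := ha
    have hpi : (Real.pi : ℂ) ≠ 0 := Complex.ofReal_ne_zero.2 Real.pi_ne_zero
    have hI := Complex.I_ne_zero
    have h2 : (2 * (Real.pi : ℂ) * Complex.I) ≠ 0 := by
      simp [Real.pi_ne_zero, Complex.I_ne_zero]
    have hak : (a : ℂ) = (k : ℂ) * (n : ℂ) := by
      apply mul_left_cancel₀ h2
      field_simp at hk
      linear_combination (2 * (Real.pi : ℂ) * Complex.I) * hk
    have hak' : (a : ℤ) = k * n := by exact_mod_cast hak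
    have : (n : ℤ) ∣ (a : ℤ) := ⟨k, by linarith⟩
    exact_mod_cast this
  have hrlt : ∀ χ : G →* ℂˣ, r χ < n := fun χ => by have := (hr χ).1; omega
  -- r χ = 0 iff χ g = 1
  have hr0 : ∀ χ : G →* ℂˣ, χ g = 1 ↔ r χ = 0 := by
    intro χ
    constructor
    · intro h1
      have : (χ g : ℂ) = 1 := by rw [h1]; rfl
      rw [(hr χ).2] at this
      have := hdvd _ this
      exact Nat.eq_zero_of_dvd_of_lt this (hrlt χ)
    · intro h0
      have : (χ g : ℂ) = 1 := by
        rw [(hr χ).2, h0]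
        simp
      exact Units.ext this
  -- inverse character value
  have hinvval : ∀ χ : G →* ℂˣ, (χ⁻¹ : G →* ℂˣ) g = (χ g)⁻¹ := fun χ => rfl
  -- pairing
  have hpair : ∀ χ : G →* ℂˣ, χ g ≠ 1 → r χ + r χ⁻¹ = n := by
    intro χ hne
    have hmul : ((χ g : ℂˣ) : ℂ) * (((χ⁻¹ : G →* ℂˣ) g : ℂˣ) : ℂ) = 1 := by
      rw [hinvval]
      push_cast
      simp
    rw [(hr χ).2, (hr χ⁻¹).2, ← Complex.exp_add] at hmul
    have heq : 2 * (Real.pi:ℂ) * Complex.I * ((r χ : ℂ)) / (n:ℂ) +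
        2 * (Real.pi:ℂ) * Complex.I * ((r χ⁻¹ : ℂ)) / (n:ℂ) =
        2 * (Real.pi:ℂ) * Complex.I * ((r χ + r χ⁻¹ : ℕ) : ℂ) / (n:ℂ) := by
      push_cast; ring
    rw [heq] at hmul
    obtain ⟨t, ht⟩ := hdvd _ hmul
    have h1 : r χ ≠ 0 := fun h => hne ((hr0 χ).2 h)
    have h2 : r χ < n := hrlt χ
    have h3 : r χ⁻¹ < n := hrlt χ⁻¹
    have htlt : n * t < n * 2 := by omega
    have ht2 : t < 2 := Nat.lt_of_mul_lt_mul_left htlt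
    have ht0 : t ≠ 0 := by rintro rfl; simp at ht; omega
    have ht1 : t = 1 := by omega
    subst ht1
    omega
  -- φ has finite order
  have hφn : φ ^ n = 1 := by
    refine MonoidHom.ext fun χ => ?_
    rw [MonoidHom.pow_apply, MonoidHom.one_apply]
    show ((χ : G →* ℂˣ) g) ^ n = 1
    have hg : g ^ n = 1 := pow_orderOf_eq_one g
    rw [← map_pow, hg, map_one]
  have hφfin : IsOfFinOrder φ := isOfFinOrder_iff_pow_eq_one.2 ⟨n, hn0, hφn⟩
  have hm0 : 0 < orderOf φ := hφfin.orderOf_pos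
  -- the order of φ equals the cardinality of its range
  have hord : orderOf φ = Monoid.exponent ↥φ.range := by
    apply Nat.dvd_antisymm
    · apply orderOf_dvd_of_pow_eq_one
      refine MonoidHom.ext fun χ => ?_
      rw [MonoidHom.pow_apply, MonoidHom.one_apply]
      have hx : (⟨φ χ, ⟨χ, rfl⟩⟩ : φ.range) ^ Monoid.exponent ↥φ.range = 1 :=
        Monoid.pow_exponent_eq_one _
      have h2 := congrArg Subtype.val hx
      simpa using h2
    · apply Monoid.exponent_dvd_of_forall_pow_eq_one
      rintro ⟨w, χ, rfl⟩
      have h1 : (φ ^ orderOf φ) χ = 1 := by rw [pow_orderOf_eq_one φ]; rfl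
      simp only [MonoidHom.pow_apply, MonoidHom.one_apply] at h1
      refine Subtype.ext ?_
      simpa using h1
  have hrange : Nat.card ↥φ.range = orderOf φ := by
    rw [hord, IsCyclic.exponent_eq_card]
  -- |H| = |ker φ| * orderOf φ
  have hHcard : Nat.card ↥H = Nat.card ↥φ.ker * orderOf φ := by
    calc Nat.card ↥H = Nat.card (↥H ⧸ φ.ker) * Nat.card ↥φ.ker :=
          Subgroup.card_eq_card_quotient_mul_card_subgroup φ.ker
      _ = Nat.card ↥φ.range * Nat.card ↥φ.ker := by
          rw [Nat.card_congr (QuotientGroup.quotientKerEquivRange φ).toEquiv]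
      _ = Nat.card ↥φ.ker * orderOf φ := by rw [hrange]; ring
  -- counting
  set K := S.filter (fun χ => χ g = 1) with hKdef
  have hScard : S.card = Nat.card ↥H := by
    rw [Nat.card_eq_fintype_card, Fintype.card_subtype, hSdef]
  have hKcard : K.card = Nat.card ↥φ.ker := by
    have hKeq : K = Finset.univ.filter (fun χ => χ ∈ H ∧ χ g = 1) := by
      rw [hKdef, hSdef, Finset.filter_filter]
    rw [Nat.card_eq_fintype_card, hKeq, ← Fintype.card_subtype]
    refine (Fintype.card_congr ⟨fun x => ⟨x.1.1, x.1.2, (MonoidHom.mem_ker).mp x.2⟩,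
      fun x => ⟨⟨x.1, x.2.1⟩, show φ ⟨x.1, x.2.1⟩ = 1 from x.2.2⟩,
      fun x => rfl, fun x => rfl⟩).symm
  -- sum over inverses
  have hinv : ∑ χ ∈ S, ((r χ⁻¹ : ℚ)) = ∑ χ ∈ S, (r χ : ℚ) := by
    apply Finset.sum_equiv (Equiv.inv (G →* ℂˣ))
    · intro χ
      simp [hSdef, inv_mem_iff]
    · intro χ _
      simp
  have h2sum : (2:ℚ) * ∑ χ ∈ S, (r χ:ℚ) =
      (n:ℚ) * ((S.filter (fun χ => ¬ χ g = 1)).card : ℚ) := by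
    calc (2:ℚ) * ∑ χ ∈ S, (r χ:ℚ) = ∑ χ ∈ S, ((r χ:ℚ) + (r χ⁻¹:ℚ)) := by
          rw [Finset.sum_add_distrib, hinv]; ring
      _ = ∑ χ ∈ S, (if χ g = 1 then (0:ℚ) else (n:ℚ)) := by
          refine Finset.sum_congr rfl fun χ _ => ?_
          by_cases h : χ g = 1
          · have h1 : r χ = 0 := (hr0 χ).1 h
            have h2 : r χ⁻¹ = 0 := (hr0 χ⁻¹).1 (by rw [hinvval, h]; simp)
            simp [h, h1, h2]
          · have := hpair χ h
            rw [if_neg h]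
            push_cast [← this]
            ring
      _ = (n:ℚ) * ((S.filter (fun χ => ¬ χ g = 1)).card : ℚ) := by
          rw [Finset.sum_ite, Finset.sum_const, Finset.sum_const]
          simp [mul_comm]
  have hsplit : K.card + (S.filter (fun χ => ¬ χ g = 1)).card = S.card := by
    rw [hKdef]
    exact Finset.card_filter_add_card_filter_not (s := S)
      (fun χ : G →* ℂˣ => χ g = 1)
  -- final arithmetic
  have hmQ : ((orderOf φ : ℚ)) ≠ 0 := Nat.cast_ne_zero.2 hm0.ne'
  have hcast : (Nat.card ↥H : ℚ) = (K.card : ℚ) * (orderOf φ : ℚ) := by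
    rw [hHcard, ← hKcard]; push_cast; ring
  have hc2 : ((S.filter (fun χ => ¬ χ g = 1)).card : ℚ) =
      (K.card : ℚ) * (orderOf φ : ℚ) - (K.card : ℚ) := by
    have : (K.card : ℚ) + ((S.filter (fun χ => ¬ χ g = 1)).card : ℚ) = (S.card : ℚ) := by
      exact_mod_cast congrArg (Nat.cast : ℕ → ℚ) hsplit
    rw [hScard] at this
    rw [hcast] at this
    linarith
  rw [hc2] at h2sum
  rw [hcast]
  field_simp
  linear_combination h2sum
end

section
/- Let G = (ℤ/2ℤ)^k with dual basis ε_1,…,ε_k of G*, and suppose nonnegative integers (l_χ)_{χ∈G*} satisfy: l_0 = 0, l_χ ≥ 1 for all χ ≠ 0, l_{ε_1} = 4, l_χ ≤ 2 for all χ ∉ {0, ε_1}, and there exist nonnegative d_g (d_0 = 0) with l_χ = (1/2)Σ_{g: χ(g)≠1} d_g and the compatibility l_χ + l_{χ+ε_1} ≥ l_{ε_1} with equality Σ_g ε^g_{χ,χ+ε_1} d_g = l_χ + l_{χ+ε_1} − l_{ε_1} (where ε^g_{χ,χ'} = 1 iff χ(g) ≠ 1 and χ'(g) ≠ 1). Then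 l_χ = 2 for all χ ∉ {0, ε_1}, and d_g = 0 for all g ∈ ker ε_1, and d_g = 2^{4−k} for all g ∉ ker ε_1; in particular k ≤ 4. -/
/-- For `G = (ℤ/2ℤ)^k`, identify the character group `G*` with `G` via the pairing
`pair χ g = ∑ χᵢ·gᵢ ∈ ℤ/2`; the character `χ` satisfies `χ(g) = 1` iff `pair χ g = 0`. -/
def pair {k : ℕ} (χ g : Fin k → ZMod 2) : ZMod 2 := ∑ i, χ i * g i

/-- The `(m+1)`-st standard basis vector of `(ℤ/2ℤ)^k` (indexing from `0`);
`eVec k 0` plays the role of `e_1`/`ε_1`. -/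
def eVec (k m : ℕ) : Fin k → ZMod 2 := fun j => if (j : ℕ) = m then 1 else 0

open Finset

lemma zne (a : ZMod 2) : a ≠ 0 ↔ a = 1 := by revert a; decide

lemma pair_add_left {k : ℕ} (χ ψ g : Fin k → ZMod 2) :
    pair (χ + ψ) g = pair χ g + pair ψ g := by
  simp [pair, add_mul, Finset.sum_add_distrib]

lemma pair_zero_left {k : ℕ} (g : Fin k → ZMod 2) : pair 0 g = 0 := by
  simp [pair]

lemma pair_eVec_left {k : ℕ} (i : Fin k) (g : Fin k → ZMod 2) :
    pair (eVec k i) g = g i := by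
  simp [pair, eVec, Fin.val_eq_val, ite_mul]

lemma pair_zero_right {k : ℕ} (χ : Fin k → ZMod 2) : pair χ 0 = 0 := by
  simp [pair]

lemma not_one_iff (a : ZMod 2) : ¬ a = 1 ↔ a = 0 := by revert a; decide

lemma eVec_add_self {k : ℕ} (i : Fin k) : eVec k i + eVec k i = 0 := by
  funext j
  exact CharTwo.add_self_eq_zero _

lemma card_flip {k : ℕ} (i : Fin k) (g h : Fin k → ZMod 2) (hg : g i = 1)
    (hh : h i = 0) (c : ZMod 2) :
    (univ.filter fun χ => pair χ g = 1 ∧ pair χ h = c).card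
      = (univ.filter fun χ => pair χ g = 0 ∧ pair χ h = c).card := by
  apply Finset.card_bij' (fun χ _ => χ + eVec k i) (fun χ _ => χ + eVec k i)
  · intro χ hχ
    simp only [mem_filter, mem_univ, true_and] at hχ ⊢
    rw [pair_add_left, pair_add_left, pair_eVec_left, pair_eVec_left, hg, hh, hχ.1, hχ.2]
    constructor
    · decide
    · exact add_zero c
  · intro χ hχ
    simp only [mem_filter, mem_univ, true_and] at hχ ⊢
    rw [pair_add_left, pair_add_left, pair_eVec_left, pair_eVec_left, hg, hh, hχ.1, hχ.2]
    constructor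
    · decide
    · exact add_zero c
  · intro χ _
    rw [add_assoc, eVec_add_self, add_zero]
  · intro χ _
    rw [add_assoc, eVec_add_self, add_zero]

lemma card_half {k : ℕ} (g : Fin k → ZMod 2) (hg : g ≠ 0) :
    (univ.filter fun χ => pair χ g = 1).card = 2 ^ (k - 1) := by
  obtain ⟨i, hi⟩ := Function.ne_iff.mp hg
  have hgi : g i = 1 := (zne _).mp hi
  have hk : 1 ≤ k := i.pos
  have h1 : (univ.filter fun χ => pair χ g = 1).card
      = (univ.filter fun χ => pair χ g = 0).card := by
    have := card_flip i g 0 hgi rfl 0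
    simpa [pair_zero_right] using this
  have h2 : (univ.filter fun χ => pair χ g = 1).card
      + (univ.filter fun χ => pair χ g = 0).card = 2 ^ k := by
    have h3 := Finset.card_filter_add_card_filter_not
      (s := (univ : Finset (Fin k → ZMod 2))) (p := fun χ => pair χ g = 1)
    have h4 : (univ.filter fun χ => ¬ pair χ g = 1)
        = (univ.filter fun χ => pair χ g = 0) := by
      apply Finset.filter_congr
      intro χ _
      simpa using not_one_iff (pair χ g)
    rw [h4] at h3
    rw [h3, Finset.card_univ]
    simp [ZMod.card]
  have h5 : 2 ^ k = 2 * 2 ^ (k - 1) := by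
    rw [← pow_succ']
    congr 1
    omega
  omega


lemma card_quarter_aux {k : ℕ} (g h : Fin k → ZMod 2) (h0 : h ≠ 0) (i : Fin k)
    (hgi : g i = 1) (hhi : h i = 0) :
    (univ.filter fun χ => pair χ g = 1 ∧ pair χ h = 1).card = 2 ^ (k - 2) := by
  obtain ⟨j, hj⟩ := Function.ne_iff.mp h0
  have hij : i ≠ j := fun e => hj (e ▸ hhi)
  have hk2 : 2 ≤ k := by
    have h1 := i.isLt
    have h2 := j.isLt
    have h3 : (i : ℕ) ≠ (j : ℕ) := fun e => hij (Fin.ext e)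
    omega
  have hflip := card_flip i g h hgi hhi 1
  have hsplit : (univ.filter fun χ => pair χ g = 1 ∧ pair χ h = 1).card
      + (univ.filter fun χ => pair χ g = 0 ∧ pair χ h = 1).card
      = (univ.filter fun χ => pair χ h = 1).card := by
    have h3 := Finset.card_filter_add_card_filter_not
      (s := univ.filter fun χ => pair χ h = 1) (p := fun χ => pair χ g = 1)
    rw [Finset.filter_filter, Finset.filter_filter] at h3
    rw [← h3]
    congr 1
    · congr 1
      apply Finset.filter_congr
      intro χ _
      simp [and_comm]
    · congr 1
      apply Finset.filter_congr
      intro χ _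
      rw [not_one_iff (pair χ g)]
      tauto
  have hh := card_half h h0
  have h5 : 2 ^ (k - 1) = 2 * 2 ^ (k - 2) := by
    rw [← pow_succ']
    congr 1
    omega
  omega

lemma card_quarter {k : ℕ} (hk : 1 ≤ k) (g h : Fin k → ZMod 2)
    (hg0 : g ⟨0, hk⟩ = 1) (hh0 : h ⟨0, hk⟩ = 1) (hne : g ≠ h) :
    (univ.filter fun χ => pair χ g = 1 ∧ pair χ h = 1).card = 2 ^ (k - 2) := by
  have hgz : g ≠ 0 := fun e => by simp [e] at hg0
  have hhz : h ≠ 0 := fun e => by simp [e] at hh0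
  obtain ⟨i, hi⟩ := Function.ne_iff.mp hne
  have hcases : (g i = 1 ∧ h i = 0) ∨ (g i = 0 ∧ h i = 1) := by
    have ha := g i
    revert hi
    generalize g i = a
    generalize h i = b
    revert a b; decide
  rcases hcases with ⟨h1, h2⟩ | ⟨h1, h2⟩
  · exact card_quarter_aux g h hhz i h1 h2
  · rw [show (univ.filter fun χ => pair χ g = 1 ∧ pair χ h = 1)
        = (univ.filter fun χ => pair χ h = 1 ∧ pair χ g = 1) from
      Finset.filter_congr fun χ _ => by tauto]
    exact card_quarter_aux h g hgz i h2 h1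

lemma vadd_self {k : ℕ} (v : Fin k → ZMod 2) : v + v = 0 :=
  funext fun _ => CharTwo.add_self_eq_zero _

/-- numerical classification of type A smooth `k`-double planes with
`p_g = 3`: `l_χ = 2` off `{0, ε₁}`, `d_g = 0` on `ker ε₁`, `d_g = 2^{4−k}` off
`ker ε₁`, and in particular `k ≤ 4`. -/
theorem stmt_9 (k : ℕ) (hk : 1 ≤ k)
    (l d : (Fin k → ZMod 2) → ℕ)
    (hl0 : l 0 = 0)
    (hlpos : ∀ χ, χ ≠ 0 → 1 ≤ l χ)
    (hle1 : l (eVec k 0) = 4)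
    (hlle : ∀ χ, χ ≠ 0 → χ ≠ eVec k 0 → l χ ≤ 2)
    (hd0 : d 0 = 0)
    (hld : ∀ χ, 2 * l χ = ∑ g ∈ Finset.univ.filter (fun g => pair χ g ≠ 0), d g)
    (hcomp : ∀ χ, l (eVec k 0) ≤ l χ + l (χ + eVec k 0) ∧
      (∑ g ∈ Finset.univ.filter
          (fun g => pair χ g ≠ 0 ∧ pair (χ + eVec k 0) g ≠ 0), (d g : ℤ)) =
        (l χ : ℤ) + (l (χ + eVec k 0) : ℤ) - (l (eVec k 0) : ℤ)) :
    k ≤ 4 ∧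
    (∀ χ, χ ≠ 0 → χ ≠ eVec k 0 → l χ = 2) ∧
    (∀ g, pair (eVec k 0) g = 0 → d g = 0) ∧
    (∀ g, pair (eVec k 0) g ≠ 0 → d g = 2 ^ (4 - k)) := by
  have hpe : ∀ g : Fin k → ZMod 2, pair (eVec k 0) g = g ⟨0, hk⟩ :=
    fun g => pair_eVec_left ⟨0, hk⟩ g
  have headd : eVec k 0 + eVec k 0 = 0 := vadd_self _
  -- Step 1a
  have hstep1 : ∀ χ, χ ≠ 0 → χ ≠ eVec k 0 →
      (l χ = 2 ∧ ∀ g, pair χ g ≠ 0 → pair (χ + eVec k 0) g ≠ 0 → d g = 0) := by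
    intro χ hχ0 hχe
    obtain ⟨hc1, hc2⟩ := hcomp χ
    have hne1 : χ + eVec k 0 ≠ 0 := by
      intro h0
      apply hχe
      have := congrArg (· + eVec k 0) h0
      simpa [add_assoc, headd] using this
    have hne2 : χ + eVec k 0 ≠ eVec k 0 := by
      intro h0
      apply hχ0
      have := congrArg (· + eVec k 0) h0
      simpa [add_assoc, headd] using this
    have l1 : l χ ≤ 2 := hlle χ hχ0 hχe
    have l2 : l (χ + eVec k 0) ≤ 2 := hlle _ hne1 hne2
    rw [hle1] at hc1
    have lχ : l χ = 2 := by omega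
    have lχe : l (χ + eVec k 0) = 2 := by omega
    refine ⟨lχ, ?_⟩
    rw [lχ, lχe, hle1] at hc2
    norm_num at hc2
    have hzero := (Finset.sum_eq_zero_iff_of_nonneg
      (fun g _ => Int.natCast_nonneg (d g))).mp hc2
    intro g h1 h2
    have := hzero g (by simp [h1, h2])
    exact_mod_cast this
  -- Step 1b
  have hker : ∀ g : Fin k → ZMod 2, g ⟨0, hk⟩ = 0 → d g = 0 := by
    intro g hg
    by_cases hgz : g = 0
    · rw [hgz]; exact hd0
    obtain ⟨i, hi⟩ := Function.ne_iff.mp hgz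
    have hgi : g i = 1 := (zne _).mp (by simpa using hi)
    have hi0 : i ≠ ⟨0, hk⟩ := by
      intro h0
      rw [h0, hg] at hgi
      exact zero_ne_one hgi
    have hiv : (i : ℕ) ≠ 0 := fun h0 => hi0 (Fin.ext h0)
    have hχ0 : eVec k (i : ℕ) ≠ 0 := by
      intro h0
      have := congrFun h0 i
      simp [eVec] at this
    have hχe : eVec k (i : ℕ) ≠ eVec k 0 := by
      intro h0
      have := congrFun h0 i
      simp [eVec, hiv] at this
    refine (hstep1 _ hχ0 hχe).2 g ?_ ?_
    · rw [pair_eVec_left i g, hgi]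
      exact one_ne_zero
    · rw [pair_add_left, pair_eVec_left i g, hpe g, hgi, hg, add_zero]
      exact one_ne_zero
  -- Step 2
  have hH8 : ∑ g ∈ univ.filter (fun g => pair (eVec k 0) g ≠ 0), d g = 8 := by
    rw [← hld (eVec k 0), hle1]
  -- key double counting
  have key : 2 ≤ k → ∀ gs : Fin k → ZMod 2, gs ⟨0, hk⟩ = 1 →
      2 ^ (k - 2) * d gs = 4 := by
    intro hk2 gs hgs
    set S := univ.filter fun χ => pair χ gs = 1 with hSdef
    have hgsz : gs ≠ 0 := by
      intro h0
      rw [h0] at hgs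
      exact zero_ne_one hgs
    have hScard : S.card = 2 ^ (k - 1) := card_half gs hgsz
    have heS : eVec k 0 ∈ S := by
      rw [hSdef, Finset.mem_filter]
      exact ⟨Finset.mem_univ _, by rw [hpe gs, hgs]⟩
    have h0S : (0 : Fin k → ZMod 2) ∉ S := by
      rw [hSdef, Finset.mem_filter]
      rw [pair_zero_left]
      simp
    -- sum of l over S
    have hSl : ∑ χ ∈ S, l χ = 2 ^ k + 2 := by
      rw [← Finset.add_sum_erase S l heS, hle1]
      have hall : ∀ χ ∈ S.erase (eVec k 0), l χ = 2 := by
        intro χ hχ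
        obtain ⟨hne, hmem⟩ := Finset.mem_erase.mp hχ
        exact (hstep1 χ (fun h0 => h0S (h0 ▸ hmem)) hne).1
      rw [Finset.sum_congr rfl hall, Finset.sum_const, smul_eq_mul,
        Finset.card_erase_of_mem heS, hScard]
      have h5 : 2 ^ k = 2 * 2 ^ (k - 1) := by
        rw [← pow_succ']; congr 1; omega
      have h6 : 1 ≤ 2 ^ (k - 1) := Nat.one_le_two_pow
      omega
    -- double counting
    have hdc : ∑ χ ∈ S, (2 * l χ)
        = ∑ g ∈ univ, (S.filter fun χ => pair χ g ≠ 0).card * d g := by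
      calc ∑ χ ∈ S, (2 * l χ)
          = ∑ χ ∈ S, ∑ g ∈ univ.filter (fun g => pair χ g ≠ 0), d g :=
            Finset.sum_congr rfl (fun χ _ => hld χ)
        _ = ∑ χ ∈ S, ∑ g ∈ univ, if pair χ g ≠ 0 then d g else 0 :=
            Finset.sum_congr rfl (fun χ _ => Finset.sum_filter _ _)
        _ = ∑ g ∈ univ, ∑ χ ∈ S, if pair χ g ≠ 0 then d g else 0 :=
            Finset.sum_comm
        _ = ∑ g ∈ univ, ∑ χ ∈ S.filter (fun χ => pair χ g ≠ 0), d g :=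
            Finset.sum_congr rfl (fun g _ => (Finset.sum_filter _ _).symm)
        _ = ∑ g ∈ univ, (S.filter fun χ => pair χ g ≠ 0).card * d g := by
            refine Finset.sum_congr rfl (fun g _ => ?_)
            rw [Finset.sum_const, smul_eq_mul]
    set H := univ.filter (fun g => pair (eVec k 0) g ≠ 0) with hHdef
    have hres : ∑ g ∈ univ, (S.filter fun χ => pair χ g ≠ 0).card * d g
        = ∑ g ∈ H, (S.filter fun χ => pair χ g ≠ 0).card * d g := by
      refine (Finset.sum_subset (Finset.subset_univ H) ?_).symm
      intro g _ hgH
      have : pair (eVec k 0) g = 0 := by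
        rw [hHdef, Finset.mem_filter] at hgH
        push_neg at hgH
        exact hgH (Finset.mem_univ _)
      rw [hker g (by rw [← hpe g]; exact this), mul_zero]
    have hgsH : gs ∈ H := by
      rw [hHdef, Finset.mem_filter]
      refine ⟨Finset.mem_univ _, ?_⟩
      rw [hpe gs, hgs]
      exact one_ne_zero
    have hcgs : (S.filter fun χ => pair χ gs ≠ 0).card = 2 ^ (k - 1) := by
      rw [Finset.filter_eq_self.mpr, hScard]
      intro χ hχ
      rw [hSdef, Finset.mem_filter] at hχ
      rw [hχ.2]
      exact one_ne_zero
    have hcg : ∀ g ∈ H.erase gs,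
        (S.filter fun χ => pair χ g ≠ 0).card = 2 ^ (k - 2) := by
      intro g hg
      obtain ⟨hne, hmem⟩ := Finset.mem_erase.mp hg
      have hg1 : g ⟨0, hk⟩ = 1 := by
        rw [hHdef, Finset.mem_filter, hpe g] at hmem
        exact (zne _).mp hmem.2
      have heq : S.filter (fun χ => pair χ g ≠ 0)
          = univ.filter (fun χ => pair χ gs = 1 ∧ pair χ g = 1) := by
        rw [hSdef, Finset.filter_filter]
        refine Finset.filter_congr (fun χ _ => ?_)
        rw [zne (pair χ g)]
      rw [heq]
      exact card_quarter hk gs g hgs hg1 (fun h0 => hne h0.symm)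
    have hsplit : ∑ g ∈ H, (S.filter fun χ => pair χ g ≠ 0).card * d g
        = 2 ^ (k - 1) * d gs + 2 ^ (k - 2) * ∑ g ∈ H.erase gs, d g := by
      rw [← Finset.add_sum_erase H _ hgsH, hcgs]
      congr 1
      rw [Finset.mul_sum]
      exact Finset.sum_congr rfl (fun g hg => by rw [hcg g hg])
    have hT : d gs + ∑ g ∈ H.erase gs, d g = 8 := by
      rw [Finset.add_sum_erase H d hgsH]
      exact hH8
    have hlhs : ∑ χ ∈ S, (2 * l χ) = 2 * (2 ^ k + 2) := by
      rw [← Finset.mul_sum, hSl]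
    rw [hlhs, hres, hsplit] at hdc
    have e2 : 2 ^ (k - 1) = 2 * 2 ^ (k - 2) := by
      rw [← pow_succ']; congr 1; omega
    have e3 : 2 ^ k = 2 ^ (k - 2) * 4 := by
      rw [show (4 : ℕ) = 2 ^ 2 from rfl, ← pow_add]; congr 1; omega
    rw [e2, e3] at hdc
    have hxy : 2 ^ (k - 2) * d gs + 2 ^ (k - 2) * (∑ g ∈ H.erase gs, d g)
        = 2 ^ (k - 2) * 8 := by
      rw [← Nat.mul_add, hT]
    have hlin : 2 * (2 ^ (k - 2) * d gs) = 2 * 2 ^ (k - 2) * d gs := by ring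
    rw [← hlin] at hdc
    omega
  -- k ≤ 4
  have he1 : (eVec k 0) ⟨0, hk⟩ = 1 := by simp [eVec]
  have hk4 : k ≤ 4 := by
    by_cases hk2 : 2 ≤ k
    · by_contra hb
      have hkey := key hk2 (eVec k 0) he1
      have hP : 8 ≤ 2 ^ (k - 2) := by
        calc (8 : ℕ) = 2 ^ 3 := rfl
          _ ≤ 2 ^ (k - 2) := Nat.pow_le_pow_right (by norm_num) (by omega)
      rcases Nat.eq_zero_or_pos (d (eVec k 0)) with h0 | h0
      · rw [h0, Nat.mul_zero] at hkey; omega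
      · have := Nat.le_mul_of_pos_right (2 ^ (k - 2)) h0
        omega
    · omega
  refine ⟨hk4, fun χ h1 h2 => (hstep1 χ h1 h2).1,
    fun g hg => hker g (by rw [← hpe g]; exact hg), ?_⟩
  intro g hg
  have hg1 : g ⟨0, hk⟩ = 1 := by
    rw [hpe g] at hg
    exact (zne _).mp hg
  by_cases hk2 : 2 ≤ k
  · have hkey := key hk2 g hg1
    have hmul : 2 ^ (k - 2) * 2 ^ (4 - k) = 4 := by
      rw [← pow_add, show (k - 2) + (4 - k) = 2 by omega]
      norm_num
    exact Nat.eq_of_mul_eq_mul_left (Nat.two_pow_pos _) (hkey.trans hmul.symm)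
  · have hk1 : k = 1 := by omega
    subst hk1
    have hH : univ.filter (fun g' => pair (eVec 1 0) g' ≠ 0) = {g} := by
      apply Finset.eq_singleton_iff_unique_mem.mpr
      refine ⟨Finset.mem_filter.mpr ⟨Finset.mem_univ _, hg⟩, ?_⟩
      intro g' hg'
      rw [Finset.mem_filter, hpe g'] at hg'
      funext j
      rw [Subsingleton.elim j (⟨0, hk⟩ : Fin 1), (zne _).mp hg'.2, hg1]
    rw [hH, Finset.sum_singleton] at hH8
    rw [hH8]
    norm_num
end

section
/- Let G = ℤ/5ℤ. There exist two distinct functions d, d': G → ℤ≥0, namely d(1̄) = d(4̄) = 2, d(0̄) = d(2̄) = d(3̄) = 0, and d'(1̄) = d'(2̄) = d'(3̄) = d'(4̄) = 1, d'(0̄) = 0, such that for every nontrivial character χ of G, Σ_{g∈G} (r_g^χ / o(g))·d(g) = Σ_{g∈G} (r_g^χ / o(g))·d'(g) = 2. -/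
lemma aux_exp_inj (a b : ℕ)
    (h : Complex.exp (2 * Real.pi * Complex.I * a / 5)
       = Complex.exp (2 * Real.pi * Complex.I * b / 5)) :
    (a : ℤ) ≡ b [ZMOD 5] := by
  rw [Complex.exp_eq_exp_iff_exists_int] at h
  obtain ⟨n, hn⟩ := h
  have hpi : (2 * Real.pi * Complex.I : ℂ) ≠ 0 := by
    simp [Real.pi_ne_zero, Complex.I_ne_zero, Complex.ofReal_ne_zero]
  have h1 : (a : ℂ) = b + n * 5 := by
    field_simp at hn
    apply mul_left_cancel₀ hpi
    linear_combination (2 * Real.pi * Complex.I) * hn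
  have h2 : (a : ℤ) = b + n * 5 := by exact_mod_cast h1
  simp [Int.ModEq, h2]

lemma aux_ord : ∀ g : ZMod 5, g ≠ 0 → addOrderOf g = 5 := by
  intro g hg
  have h1 : addOrderOf g ∣ 5 := by
    have := addOrderOf_dvd_natCard (G := ZMod 5) g
    simpa using this
  have h2 : addOrderOf g ≠ 1 := by
    simpa [AddMonoid.addOrderOf_eq_one_iff] using hg
  rcases (Nat.Prime.eq_one_or_self_of_dvd (by norm_num) _ h1) with h | h <;> omega

/-- Example with `G = ℤ/5ℤ`: two distinct branch-degree functions
`d, d'` giving the same characteristic degrees `∑_g (r_g^χ/o(g))·d(g) = 2` for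
every nontrivial character `χ`. -/
theorem stmt_15 :
    ∃ d d' : ZMod 5 → ℕ,
      d ≠ d' ∧
      d 0 = 0 ∧ d 1 = 2 ∧ d 2 = 0 ∧ d 3 = 0 ∧ d 4 = 2 ∧
      d' 0 = 0 ∧ d' 1 = 1 ∧ d' 2 = 1 ∧ d' 3 = 1 ∧ d' 4 = 1 ∧
      ∀ (χ : AddChar (ZMod 5) ℂ), χ ≠ 1 →
        ∀ r : ZMod 5 → ℕ,
          (∀ g, r g ≤ addOrderOf g - 1 ∧
            χ g = Complex.exp
              (2 * Real.pi * Complex.I * (r g : ℂ) / (addOrderOf g : ℂ))) →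
          (∑ g : ZMod 5, ((r g : ℚ) / (addOrderOf g : ℚ)) * (d g : ℚ)) = 2 ∧
          (∑ g : ZMod 5, ((r g : ℚ) / (addOrderOf g : ℚ)) * (d' g : ℚ)) = 2 := by
  refine ⟨fun g => if g = 1 ∨ g = 4 then 2 else 0, fun g => if g = 0 then 0 else 1,
    ?_, by decide, by decide, by decide, by decide, by decide,
    by decide, by decide, by decide, by decide, by decide, ?_⟩
  · intro h
    have := congrFun h 2
    exact absurd this (by decide)
  intro χ hχ r hr
  have ho1 : addOrderOf (1 : ZMod 5) = 5 := aux_ord 1 (by decide)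
  have ho2 : addOrderOf (2 : ZMod 5) = 5 := aux_ord 2 (by decide)
  have ho3 : addOrderOf (3 : ZMod 5) = 5 := aux_ord 3 (by decide)
  have ho4 : addOrderOf (4 : ZMod 5) = 5 := aux_ord 4 (by decide)
  have hr0 : r 0 = 0 := by
    have := (hr 0).1
    simp [addOrderOf_zero] at this
    omega
  have hb1 : r 1 ≤ 4 := by have := (hr 1).1; omega
  have hb2 : r 2 ≤ 4 := by have := (hr 2).1; rw [ho2] at this; omega
  have hb3 : r 3 ≤ 4 := by have := (hr 3).1; rw [ho3] at this; omega
  have hb4 : r 4 ≤ 4 := by have := (hr 4).1; rw [ho4] at this; omega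
  have hχ1 : χ 1 = Complex.exp (2 * Real.pi * Complex.I * (r 1 : ℂ) / 5) := by
    have := (hr 1).2; rwa [ho1] at this
  have hχ2 : χ 2 = Complex.exp (2 * Real.pi * Complex.I * (r 2 : ℂ) / 5) := by
    have := (hr 2).2; rwa [ho2] at this
  have hχ3 : χ 3 = Complex.exp (2 * Real.pi * Complex.I * (r 3 : ℂ) / 5) := by
    have := (hr 3).2; rwa [ho3] at this
  have hχ4 : χ 4 = Complex.exp (2 * Real.pi * Complex.I * (r 4 : ℂ) / 5) := by
    have := (hr 4).2; rwa [ho4] at this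
  -- relations
  have e2 : χ 2 = χ 1 * χ 1 := by
    rw [show (2 : ZMod 5) = 1 + 1 by decide, AddChar.map_add_eq_mul]
  have e3 : χ 3 = χ 2 * χ 1 := by
    rw [show (3 : ZMod 5) = 2 + 1 by decide, AddChar.map_add_eq_mul]
  have e4 : χ 4 = χ 3 * χ 1 := by
    rw [show (4 : ZMod 5) = 3 + 1 by decide, AddChar.map_add_eq_mul]
  have key : ∀ a b : ℕ,
      Complex.exp (2 * Real.pi * Complex.I * a / 5)
        * Complex.exp (2 * Real.pi * Complex.I * b / 5)
      = Complex.exp (2 * Real.pi * Complex.I * (a + b : ℕ) / 5) := by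
    intro a b
    rw [← Complex.exp_add]
    push_cast
    ring_nf
  have c2 : (r 2 : ℤ) ≡ (r 1 + r 1 : ℕ) [ZMOD 5] := by
    apply aux_exp_inj
    rw [← hχ2, e2, hχ1, key]
  have c3 : (r 3 : ℤ) ≡ (r 2 + r 1 : ℕ) [ZMOD 5] := by
    apply aux_exp_inj
    rw [← hχ3, e3, hχ2, hχ1, key]
  have c4 : (r 4 : ℤ) ≡ (r 3 + r 1 : ℕ) [ZMOD 5] := by
    apply aux_exp_inj
    rw [← hχ4, e4, hχ3, hχ1, key]
  have hne : r 1 ≠ 0 := by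
    intro h0
    apply hχ
    have h1 : χ 1 = 1 := by rw [hχ1, h0]; simp
    have h2 : χ 2 = 1 := by rw [e2, h1]; ring
    have h3 : χ 3 = 1 := by rw [e3, h2, h1]; ring
    have h4 : χ 4 = 1 := by rw [e4, h3, h1]; ring
    ext g
    have : g = 0 ∨ g = 1 ∨ g = 2 ∨ g = 3 ∨ g = 4 := by
      revert g; decide
    rcases this with h | h | h | h | h <;> subst h <;>
      simp [AddChar.map_zero_eq_one, h1, h2, h3, h4]
  simp only [Int.ModEq] at c2 c3 c4
  have v2 : r 2 = (2 * r 1) % 5 := by push_cast at c2; omega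
  have v3 : r 3 = (3 * r 1) % 5 := by push_cast at c3; omega
  have v4 : r 4 = (4 * r 1) % 5 := by push_cast at c4; omega
  have hs : ∀ f : ZMod 5 → ℚ, (∑ g : ZMod 5, f g) = f 0 + f 1 + f 2 + f 3 + f 4 :=
    fun f => Fin.sum_univ_five f
  have h14 : r 1 = 1 ∨ r 1 = 2 ∨ r 1 = 3 ∨ r 1 = 4 := by omega
  rcases h14 with h | h | h | h <;>
    refine ⟨?_, ?_⟩ <;>
    · rw [hs]
      simp (config := { decide := true }) only [hr0, h, v2, v3, v4, ho1, ho2, ho3, ho4,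
        addOrderOf_zero]
      norm_num
end
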